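/- Fix n ∈ ℕ and real parameters a, b, α, β with (a−b+1|q)_n (β+1|q)_n (a+b+α+1|q)_n ≠ 0 and (α+β+n+1|q)_n ≠ 0. Then there exists a polynomial P ∈ ℝ[X] of degree exactly n, with leading coefficient (α+β+n+1|q)_n / [n]_q!, such that for every real s one has u_n^{α,β}(x(s),a,b)_q = P([s]_q [s+1]_q). -/
import Mathlib


open Finset

/-- The symmetric q-number `[s]_q = (q^{s/2} - q^{-s/2})/(q^{1/2} - q^{-1/2})`. -/
noncomputable def qnum (q s : ℝ) : ℝ :=
  (q ^ (s / 2) - q ^ (-s / 2)) / (q ^ ((1 : ℝ) / 2) - q ^ (-(1 : ℝ) / 2))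

/-- The symmetric q-factorial `[n]_q! = ∏_{m=1}^n [m]_q`. -/
noncomputable def qfact (q : ℝ) (n : ℕ) : ℝ :=
  ∏ m ∈ Finset.range n, qnum q ((m : ℝ) + 1)

/-- The symmetric q-Pochhammer symbol `(a|q)_k = ∏_{m=0}^{k-1} [a+m]_q`. -/
noncomputable def qpoch (q a : ℝ) (k : ℕ) : ℝ :=
  ∏ m ∈ Finset.range k, qnum q (a + (m : ℝ))

/-- The q-Racah polynomial `u_n^{α,β}(x(s),a,b)_q` on the lattice `x(s)=[s]_q[s+1]_q`. -/
noncomputable def racahU (q a b α β : ℝ) (n : ℕ) (s : ℝ) : ℝ :=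
  qpoch q (a - b + 1) n * qpoch q (β + 1) n * qpoch q (a + b + α + 1) n / qfact q n *
    ∑ k ∈ Finset.range (n + 1),
      qpoch q (-(n : ℝ)) k * qpoch q (α + β + (n : ℝ) + 1) k * qpoch q (a - s) k *
          qpoch q (a + s + 1) k /
        (qpoch q 1 k * qpoch q (a - b + 1) k * qpoch q (β + 1) k *
          qpoch q (a + b + α + 1) k)

/-- The alternative q-Racah polynomial `ũ_n^{α,β}(x(s),a,b)_q`. -/
noncomputable def racahUt (q a b α β : ℝ) (n : ℕ) (s : ℝ) : ℝ :=
  qpoch q (a - b + 1) n * qpoch q (2 * a - β + 1) n * qpoch q (a - b - α + 1) n / qfact q n *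
    ∑ k ∈ Finset.range (n + 1),
      qpoch q (-(n : ℝ)) k * qpoch q (2 * a - 2 * b - α - β + (n : ℝ) + 1) k *
          qpoch q (a - s) k * qpoch q (a + s + 1) k /
        (qpoch q 1 k * qpoch q (a - b + 1) k * qpoch q (2 * a - β + 1) k *
          qpoch q (a - b - α + 1) k)

/-- `σ(s) = [s-a]_q [s+b]_q [s+a-β]_q [b+α-s]_q`. -/
noncomputable def racahSigma (q a b α β s : ℝ) : ℝ :=
  qnum q (s - a) * qnum q (s + b) * qnum q (s + a - β) * qnum q (b + α - s)

/-- `σ(-s-1) = [s+a+1]_q [b-s-1]_q [s-a+β+1]_q [b+α+s+1]_q`. -/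
noncomputable def racahSigmaM (q a b α β s : ℝ) : ℝ :=
  qnum q (s + a + 1) * qnum q (b - s - 1) * qnum q (s - a + β + 1) * qnum q (b + α + s + 1)

/-- `σ̃(s) = [s-a]_q [s+b]_q [s-a+β]_q [b+α+s]_q`. -/
noncomputable def racahSigmaT (q a b α β s : ℝ) : ℝ :=
  qnum q (s - a) * qnum q (s + b) * qnum q (s - a + β) * qnum q (b + α + s)

/-- `σ̃(-s-1) = [s+a+1]_q [b-s-1]_q [s+a-β+1]_q [b+α-s-1]_q`. -/
noncomputable def racahSigmaTM (q a b α β s : ℝ) : ℝ :=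
  qnum q (s + a + 1) * qnum q (b - s - 1) * qnum q (s + a - β + 1) * qnum q (b + α - s - 1)

/-- `τ_n(s)` for the q-Racah polynomials. -/
noncomputable def racahTau (q a b α β : ℝ) (n : ℕ) (s : ℝ) : ℝ :=
  -qnum q (α + β + 2 * (n : ℝ) + 2) * qnum q (s + (n : ℝ) / 2) * qnum q (s + (n : ℝ) / 2 + 1) +
    qnum q (a + (n : ℝ) / 2 + 1) * qnum q (b - (n : ℝ) / 2 - 1) *
      qnum q (β + (n : ℝ) / 2 + 1 - a) * qnum q (b + α + (n : ℝ) / 2 + 1) -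
    qnum q (a + (n : ℝ) / 2) * qnum q (b - (n : ℝ) / 2) * qnum q (β + (n : ℝ) / 2 - a) *
      qnum q (b + α + (n : ℝ) / 2)

lemma rpow_ne_rpow {q : ℝ} (hq0 : 0 < q) (hq1 : q ≠ 1) {y z : ℝ} (h : y < z) :
    q ^ y ≠ q ^ z := by
  rcases lt_or_gt_of_ne hq1 with h1 | h1
  · exact ne_of_gt (Real.rpow_lt_rpow_of_exponent_gt hq0 h1 h)
  · exact ne_of_lt (Real.rpow_lt_rpow_of_exponent_lt h1 h)

lemma qnum_ne_zero {q : ℝ} (hq0 : 0 < q) (hq1 : q ≠ 1) {x : ℝ} (hx : 0 < x) :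
    qnum q x ≠ 0 := by
  have h1 : q ^ (-x / 2) ≠ q ^ (x / 2) := rpow_ne_rpow hq0 hq1 (by linarith)
  have h2 : q ^ (-(1:ℝ) / 2) ≠ q ^ ((1:ℝ) / 2) := rpow_ne_rpow hq0 hq1 (by norm_num)
  exact div_ne_zero (sub_ne_zero.mpr h1.symm) (sub_ne_zero.mpr h2.symm)

lemma qnum_neg (q x : ℝ) : qnum q (-x) = -qnum q x := by
  rw [qnum, qnum, neg_neg]
  ring

lemma qnum_key {q : ℝ} (hq0 : 0 < q) (u s : ℝ) :
    qnum q (u - s) * qnum q (u + 1 + s)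
      = qnum q u * qnum q (u + 1) - qnum q s * qnum q (s + 1) := by
  have hA : (0:ℝ) < q ^ (u / 2) := Real.rpow_pos_of_pos hq0 _
  have hB : (0:ℝ) < q ^ (s / 2) := Real.rpow_pos_of_pos hq0 _
  have hE : (0:ℝ) < q ^ ((1:ℝ) / 2) := Real.rpow_pos_of_pos hq0 _
  have e1 : q ^ ((u - s) / 2) = q ^ (u/2) / q ^ (s/2) := by
    rw [show (u - s)/2 = u/2 - s/2 by ring, Real.rpow_sub hq0]
  have e2 : q ^ (-(u - s) / 2) = q ^ (s/2) / q ^ (u/2) := by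
    rw [show -(u - s)/2 = s/2 - u/2 by ring, Real.rpow_sub hq0]
  have e3 : q ^ ((u + 1 + s) / 2) = q ^ (u/2) * q ^ ((1:ℝ)/2) * q ^ (s/2) := by
    rw [show (u + 1 + s)/2 = (u/2 + 1/2) + s/2 by ring, Real.rpow_add hq0,
      Real.rpow_add hq0]
  have e4 : q ^ (-(u + 1 + s) / 2) = (q ^ (u/2) * q ^ ((1:ℝ)/2) * q ^ (s/2))⁻¹ := by
    rw [show -(u + 1 + s)/2 = -((u/2 + (1:ℝ)/2) + s/2) by ring, Real.rpow_neg hq0.le,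
      Real.rpow_add hq0, Real.rpow_add hq0]
  have e5 : q ^ (-u / 2) = (q ^ (u/2))⁻¹ := by
    rw [show -u/2 = -(u/2) by ring, Real.rpow_neg hq0.le]
  have e6 : q ^ ((u + 1) / 2) = q ^ (u/2) * q ^ ((1:ℝ)/2) := by
    rw [show (u + 1)/2 = u/2 + 1/2 by ring, Real.rpow_add hq0]
  have e7 : q ^ (-(u + 1) / 2) = (q ^ (u/2) * q ^ ((1:ℝ)/2))⁻¹ := by
    rw [show -(u + 1)/2 = -(u/2 + (1:ℝ)/2) by ring, Real.rpow_neg hq0.le,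
      Real.rpow_add hq0]
  have e8 : q ^ (-s / 2) = (q ^ (s/2))⁻¹ := by
    rw [show -s/2 = -(s/2) by ring, Real.rpow_neg hq0.le]
  have e9 : q ^ ((s + 1) / 2) = q ^ (s/2) * q ^ ((1:ℝ)/2) := by
    rw [show (s + 1)/2 = s/2 + 1/2 by ring, Real.rpow_add hq0]
  have e10 : q ^ (-(s + 1) / 2) = (q ^ (s/2) * q ^ ((1:ℝ)/2))⁻¹ := by
    rw [show -(s + 1)/2 = -(s/2 + (1:ℝ)/2) by ring, Real.rpow_neg hq0.le,
      Real.rpow_add hq0]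
  by_cases hd : q ^ ((1:ℝ)/2) - q ^ (-(1:ℝ)/2) = 0
  · simp only [qnum, hd, div_zero]
    ring
  · rw [qnum, qnum, qnum, qnum, qnum, qnum, e1, e2, e3, e4, e5, e6, e7, e8, e9, e10]
    field_simp
    ring

lemma qfact_ne_zero {q : ℝ} (hq0 : 0 < q) (hq1 : q ≠ 1) (n : ℕ) : qfact q n ≠ 0 := by
  rw [qfact]
  exact Finset.prod_ne_zero_iff.mpr fun m _ => qnum_ne_zero hq0 hq1 (by positivity)

lemma qpoch_one {q : ℝ} (n : ℕ) : qpoch q 1 n = qfact q n := by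
  rw [qpoch, qfact]
  exact Finset.prod_congr rfl fun m _ => by rw [add_comm]

lemma qpoch_neg_n {q : ℝ} (n : ℕ) : qpoch q (-(n:ℝ)) n = (-1)^n * qfact q n := by
  rw [qpoch]
  have h1 : ∀ m ∈ Finset.range n, qnum q (-(n:ℝ) + (m:ℝ)) = -qnum q ((n:ℝ) - (m:ℝ)) := by
    intro m _
    rw [show -(n:ℝ) + (m:ℝ) = -((n:ℝ) - (m:ℝ)) by ring, qnum_neg]
  rw [Finset.prod_congr rfl h1]
  have h2 : ∀ m ∈ Finset.range n, -qnum q ((n:ℝ) - (m:ℝ)) = (-1) * qnum q ((n:ℝ) - (m:ℝ)) :=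
    fun m _ => by ring
  rw [Finset.prod_congr rfl h2, Finset.prod_mul_distrib, Finset.prod_const, card_range]
  congr 1
  rw [qfact, ← Finset.prod_range_reflect]
  refine Finset.prod_congr rfl fun m hm => ?_
  have hm' : m + 1 ≤ n := Finset.mem_range.mp hm
  congr 1
  have h3 : n - 1 - m = n - (1 + m) := by omega
  have h4 : 1 + m ≤ n := by omega
  rw [h3, Nat.cast_sub h4]
  push_cast
  ring

lemma qpoch_pair {q : ℝ} (hq0 : 0 < q) (a s : ℝ) (k : ℕ) :
    qpoch q (a - s) k * qpoch q (a + s + 1) k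
      = ∏ m ∈ Finset.range k,
          (qnum q (a + m) * qnum q (a + m + 1) - qnum q s * qnum q (s + 1)) := by
  rw [qpoch, qpoch, ← Finset.prod_mul_distrib]
  refine Finset.prod_congr rfl fun m _ => ?_
  rw [show a - s + (m:ℝ) = (a + m) - s by ring,
    show a + s + 1 + (m:ℝ) = (a + (m:ℝ)) + 1 + s by ring, qnum_key hq0]

theorem stmt_2 (q : ℝ) (hq0 : 0 < q) (hq1 : q ≠ 1) (n : ℕ) (a b α β : ℝ)
    (hnz : qpoch q (a - b + 1) n * qpoch q (β + 1) n * qpoch q (a + b + α + 1) n ≠ 0)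
    (hnz2 : qpoch q (α + β + (n : ℝ) + 1) n ≠ 0) :
    ∃ P : Polynomial ℝ, P.degree = n ∧
      P.leadingCoeff = qpoch q (α + β + (n : ℝ) + 1) n / qfact q n ∧
      ∀ s : ℝ, racahU q a b α β n s = P.eval (qnum q s * qnum q (s + 1)) := by
  classical
  set μ : ℕ → ℝ := fun m => qnum q (a + m) * qnum q (a + m + 1) with hμ
  set c : ℕ → ℝ := fun k =>
    qpoch q (-(n : ℝ)) k * qpoch q (α + β + (n : ℝ) + 1) k /
      (qpoch q 1 k * qpoch q (a - b + 1) k * qpoch q (β + 1) k *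
        qpoch q (a + b + α + 1) k) with hc
  set K : ℝ := qpoch q (a - b + 1) n * qpoch q (β + 1) n * qpoch q (a + b + α + 1) n /
    qfact q n with hK
  set M : ℕ → Polynomial ℝ := fun k =>
    ∏ m ∈ Finset.range k, (Polynomial.X - Polynomial.C (μ m)) with hM
  set P : Polynomial ℝ :=
    ∑ k ∈ Finset.range (n + 1), Polynomial.C (K * c k * (-1) ^ k) * M k with hP
  have hF : qfact q n ≠ 0 := qfact_ne_zero hq0 hq1 n
  have hMmonic : ∀ k, (M k).Monic := fun k =>
    Polynomial.monic_prod_of_monic _ _ fun m _ => Polynomial.monic_X_sub_C _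
  have hMdeg : ∀ k, (M k).natDegree = k := by
    intro k
    rw [hM]
    rw [Polynomial.natDegree_prod_of_monic _ _ fun m _ => Polynomial.monic_X_sub_C _]
    simp [Polynomial.natDegree_X_sub_C]
  -- degree bound
  have hdegle : P.degree ≤ (n : WithBot ℕ) := by
    refine le_trans (Polynomial.degree_sum_le _ _) ?_
    refine Finset.sup_le fun k hk => ?_
    refine le_trans (Polynomial.degree_mul_le _ _) ?_
    have h1 : (Polynomial.C (K * c k * (-1) ^ k)).degree ≤ 0 := Polynomial.degree_C_le
    have h2 : (M k).degree ≤ (k : WithBot ℕ) := by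
      refine le_trans (Polynomial.degree_le_natDegree) ?_
      rw [hMdeg k]
    have h3 : (k : WithBot ℕ) ≤ (n : WithBot ℕ) :=
      Nat.cast_le.mpr (Nat.lt_succ_iff.mp (Finset.mem_range.mp hk))
    calc (Polynomial.C (K * c k * (-1) ^ k)).degree + (M k).degree
        ≤ 0 + (k : WithBot ℕ) := add_le_add h1 h2
      _ = (k : WithBot ℕ) := zero_add _
      _ ≤ (n : WithBot ℕ) := h3
  -- coeff n
  have hcoeffn : P.coeff n = K * c n * (-1) ^ n := by
    rw [hP, Finset.sum_range_succ, Polynomial.coeff_add, Polynomial.finset_sum_coeff]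
    have hz : ∀ k ∈ Finset.range n, (Polynomial.C (K * c k * (-1) ^ k) * M k).coeff n = 0 := by
      intro k hk
      refine Polynomial.coeff_eq_zero_of_natDegree_lt ?_
      refine lt_of_le_of_lt (Polynomial.natDegree_C_mul_le _ _) ?_
      rw [hMdeg k]
      exact Finset.mem_range.mp hk
    rw [Finset.sum_congr rfl hz, Finset.sum_const_zero, zero_add,
      Polynomial.coeff_C_mul]
    have : (M n).coeff n = 1 := by
      have := (hMmonic n).coeff_natDegree
      rwa [hMdeg n] at this
    rw [this, mul_one]
  -- leading value
  have hAne : qpoch q (a - b + 1) n ≠ 0 := left_ne_zero_of_mul (left_ne_zero_of_mul hnz)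
  have hBne : qpoch q (β + 1) n ≠ 0 := right_ne_zero_of_mul (left_ne_zero_of_mul hnz)
  have hDne : qpoch q (a + b + α + 1) n ≠ 0 := right_ne_zero_of_mul hnz
  have hLval : K * c n * (-1) ^ n = qpoch q (α + β + (n : ℝ) + 1) n / qfact q n := by
    rw [hK, hc]
    simp only [qpoch_one, qpoch_neg_n]
    have hsq : ((-1 : ℝ)) ^ n * (-1 : ℝ) ^ n = 1 := by
      rw [← mul_pow]; norm_num
    field_simp
    ring_nf
    rw [show (n * 2) = 2 * n by ring, pow_mul]
    norm_num
  have hLne : K * c n * (-1) ^ n ≠ 0 := by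
    rw [hLval]; exact div_ne_zero hnz2 hF
  have hdeg : P.degree = n :=
    Polynomial.degree_eq_of_le_of_coeff_ne_zero hdegle (by rw [hcoeffn]; exact hLne)
  refine ⟨P, hdeg, ?_, ?_⟩
  · rw [Polynomial.leadingCoeff, Polynomial.natDegree_eq_of_degree_eq_some hdeg,
      hcoeffn, hLval]
  · intro s
    rw [racahU, hP, Polynomial.eval_finset_sum, Finset.mul_sum]
    refine Finset.sum_congr rfl fun k hk => ?_
    rw [Polynomial.eval_mul, Polynomial.eval_C]
    simp only [hM, Polynomial.eval_prod, Polynomial.eval_sub, Polynomial.eval_X,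
      Polynomial.eval_C, hμ]
    have hpp := qpoch_pair hq0 a s k
    have hneg : (∏ m ∈ Finset.range k,
          (qnum q (a + m) * qnum q (a + m + 1) - qnum q s * qnum q (s + 1)))
        = (-1 : ℝ) ^ k * ∏ m ∈ Finset.range k,
            (qnum q s * qnum q (s + 1) - qnum q (a + m) * qnum q (a + m + 1)) := by
      have h4 : ∀ m ∈ Finset.range k,
          qnum q (a + m) * qnum q (a + m + 1) - qnum q s * qnum q (s + 1)
            = (-1) * (qnum q s * qnum q (s + 1) - qnum q (a + m) * qnum q (a + m + 1)) :=
        fun m _ => by ring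
      rw [Finset.prod_congr rfl h4, Finset.prod_mul_distrib, Finset.prod_const, card_range]
    have h5 : qpoch q (-(n : ℝ)) k * qpoch q (α + β + (n : ℝ) + 1) k * qpoch q (a - s) k *
          qpoch q (a + s + 1) k
        = qpoch q (-(n : ℝ)) k * qpoch q (α + β + (n : ℝ) + 1) k *
            ((-1 : ℝ) ^ k * ∏ m ∈ Finset.range k,
              (qnum q s * qnum q (s + 1) - qnum q (a + m) * qnum q (a + m + 1))) := by
      rw [mul_assoc, hpp, hneg]
    rw [h5, hc]
    ring
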